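/- arXiv:2104.00748 — 2 statements merged into one kernel-verified Lean document; each statement's English description precedes it below -/
import Mathlib

section
/- Fix n ≥ 1, a point x⁰ ∈ ℝⁿ, and positive reals Δ₁,…,Δ_n with Δ = Δ₁⋯Δ_n and Δ_S = √(Δ₁² + ⋯ + Δ_n²). Let f : ℝⁿ → ℝ be twice continuously differentiable on an open set containing the hyperrectangle R(x⁰;d) = {x⁰ + x : 0 ≤ x_i ≤ Δ_i}, with ∇f Lipschitz continuous with constant L_{∇f} on R(x⁰;d). Define w ∈ ℝⁿ by w_i = ∫_{R(0;d)} x_i · R₁(x⁰+x) dx, where R₁(x⁰+x) = f(x⁰+x) − f(x⁰) − ∇f(x⁰)ᵀx is the first-order Taylor remainder and the integral is over the box R(0;d) = ∏_{i=1}^n [0, Δ_i]. Let D = diag(Δ₁,…,Δ_n). Then ‖D⁻¹ w‖ ≤ (√n / 8) · L_{∇f} · Δ · Δ_S². -/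
/-!
Along the segment from `x⁰` to `x⁰ + x` the derivative of the remainder is
`⟪∇f(x⁰ + t x) - ∇f(x⁰), x⟫`, of size at most `L t ‖x‖²`, so `|R₁(x⁰ + x)| ≤ (L/2) ‖x‖²`.
Hence `|wᵢ| ≤ (L/2) ∑ⱼ ∫ xᵢ xⱼ²`. By Fubini the monomial `∏ₗ xₗ^kₗ` integrates over the box to
`∏ₗ Δₗ^(kₗ+1) / (kₗ+1)`, and for `k = eᵢ + 2eⱼ` the denominator is at least `1 + ∑ₗ kₗ = 4`,
so `|wᵢ / Δᵢ| ≤ L Δ Δ_S² / 8` for every `i`; the Euclidean norm costs the factor `√n`.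
-/

open scoped BigOperators

noncomputable section

/-- Interpret a plain vector in `Fin n → ℝ` as an element of Euclidean space,
so that `‖·‖` is the Euclidean norm. -/
def vecE {n : ℕ} (v : Fin n → ℝ) : EuclideanSpace ℝ (Fin n) :=
  (EuclideanSpace.equiv (Fin n) ℝ).symm v

/-- The box `R(0;d) = ∏ᵢ [0, Δᵢ]` in Euclidean space. -/
def box {n : ℕ} (Δ : Fin n → ℝ) : Set (EuclideanSpace ℝ (Fin n)) :=
  {x | ∀ l, x l ∈ Set.Icc (0 : ℝ) (Δ l)}

open MeasureTheory Set
open scoped NNReal RealInnerProductSpace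

theorem Convex.abs_sub_sub_inner_gradient_le {E : Type*} [NormedAddCommGroup E]
    [InnerProductSpace ℝ E] [CompleteSpace E] {f : E → ℝ} {s : Set E} {L : ℝ≥0}
    (hs : Convex ℝ s) (hf : ∀ z ∈ s, DifferentiableAt ℝ f z)
    (hlip : LipschitzOnWith L (gradient f) s) {x y : E} (hx : x ∈ s) (hy : y ∈ s) :
    |f y - f x - ⟪gradient f x, y - x⟫| ≤ L / 2 * ‖y - x‖ ^ 2 := by
  set v := y - x
  have hseg : ∀ t ∈ Icc (0 : ℝ) 1, x + t • v ∈ s := fun t ht => hs.add_smul_sub_mem hx hy ht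
  set g : ℝ → ℝ := fun t => f (x + t • v) - f x - t * ⟪gradient f x, v⟫
  have hg : ∀ t ∈ Icc (0 : ℝ) 1,
      HasDerivAt g ⟪gradient f (x + t • v) - gradient f x, v⟫ t := by
    intro t ht
    have hcurve : HasDerivAt (fun t : ℝ => x + t • v) v t := by
      simpa using ((hasDerivAt_id t).smul_const v).const_add x
    have := (((hf _ (hseg t ht)).hasFDerivAt.comp_hasDerivAt t hcurve).sub_const (f x)).sub
      ((hasDerivAt_id t).mul_const ⟪gradient f x, v⟫)
    rwa [← inner_gradient_left, one_mul, ← inner_sub_left] at this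
  have hbound : ∀ t ∈ Ico (0 : ℝ) 1,
      ‖⟪gradient f (x + t • v) - gradient f x, v⟫‖ ≤ L * ‖v‖ ^ 2 * t := by
    intro t ht
    have ht' := Ico_subset_Icc_self ht
    calc ‖⟪gradient f (x + t • v) - gradient f x, v⟫‖
        ≤ ‖gradient f (x + t • v) - gradient f x‖ * ‖v‖ := norm_inner_le_norm _ _
      _ ≤ L * ‖(x + t • v) - x‖ * ‖v‖ := by gcongr; exact hlip.norm_sub_le (hseg t ht') hx
      _ = L * ‖v‖ ^ 2 * t := by
        rw [add_sub_cancel_left, norm_smul, Real.norm_of_nonneg ht'.1]; ring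
  have hB : ∀ t, HasDerivAt (fun t : ℝ => L / 2 * ‖v‖ ^ 2 * t ^ 2) (L * ‖v‖ ^ 2 * t) t := by
    intro t
    exact ((hasDerivAt_pow 2 t).const_mul _).congr_deriv (by norm_num; ring)
  have := image_norm_le_of_norm_deriv_right_le_deriv_boundary (a := 0) (b := 1)
    (fun t ht => (hg t ht).continuousAt.continuousWithinAt)
    (fun t ht => (hg t (Ico_subset_Icc_self ht)).hasDerivWithinAt) (by simp [g]) hB hbound
    (right_mem_Icc.2 zero_le_one)
  simpa [g, v] using this

theorem convex_setOf_forall_sub_apply_mem {ι : Type*} (x0 : EuclideanSpace ℝ ι)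
    {s : ι → Set ℝ} (hs : ∀ l, Convex ℝ (s l)) :
    Convex ℝ {y : EuclideanSpace ℝ ι | ∀ l, y l - x0 l ∈ s l} := by
  intro y hy z hz a b ha hb hab l
  have hcoord : (a • y + b • z) l - x0 l = a * (y l - x0 l) + b * (z l - x0 l) := by
    simp only [PiLp.add_apply, PiLp.smul_apply, smul_eq_mul]
    linear_combination (x0 l) * hab
  rw [hcoord]
  exact hs l (hy l) (hz l) ha hb hab

theorem Finset.one_add_sum_le_prod_one_add {ι R : Type*} [CommSemiring R] [PartialOrder R]
    [IsOrderedRing R] (s : Finset ι) {f : ι → R} (hf : ∀ i ∈ s, 0 ≤ f i) :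
    1 + ∑ i ∈ s, f i ≤ ∏ i ∈ s, (1 + f i) := by
  classical
  induction s using Finset.induction_on with
  | empty => simp
  | insert a s ha ih =>
    rw [sum_insert ha, prod_insert ha]
    have hfa := hf a (mem_insert_self a s)
    have ih := ih fun i hi => hf i (mem_insert_of_mem hi)
    have hone : 1 ≤ ∏ i ∈ s, (1 + f i) := le_trans (le_add_of_nonneg_right
      (sum_nonneg fun i hi => hf i (mem_insert_of_mem hi))) ih
    calc 1 + (f a + ∑ i ∈ s, f i) = (1 + ∑ i ∈ s, f i) + f a * 1 := by ring
      _ ≤ ∏ i ∈ s, (1 + f i) + f a * ∏ i ∈ s, (1 + f i) := by gcongr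
      _ = (1 + f a) * ∏ i ∈ s, (1 + f i) := by ring

section Box

variable {n : ℕ} {Δ : Fin n → ℝ}

theorem isCompact_box (Δ : Fin n → ℝ) : IsCompact (box Δ) := by
  have hbox : box Δ = (EuclideanSpace.equiv (Fin n) ℝ).toHomeomorph ⁻¹'
      univ.pi fun l => Icc 0 (Δ l) := by
    ext x
    simp only [box, mem_preimage, mem_univ_pi]
    rfl
  rw [hbox, Homeomorph.isCompact_preimage]
  exact isCompact_univ_pi fun l => isCompact_Icc

theorem measurableSet_box (Δ : Fin n → ℝ) : MeasurableSet (box Δ) :=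
  (isCompact_box Δ).isClosed.measurableSet

theorem setIntegral_box_prod (Δ : Fin n → ℝ) (g : Fin n → ℝ → ℝ) :
    ∫ x in box Δ, ∏ l, g l (x l) = ∏ l, ∫ t in Icc 0 (Δ l), g l t := by
  have hbox : box Δ = WithLp.ofLp ⁻¹' univ.pi fun l => Icc 0 (Δ l) := by
    ext x
    simp only [box, mem_preimage, mem_univ_pi]
    rfl
  rw [hbox, (PiLp.volume_preserving_ofLp (Fin n)).setIntegral_preimage_emb
      (MeasurableEquiv.toLp 2 (Fin n → ℝ)).symm.measurableEmbedding (fun y => ∏ l, g l (y l)),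
    volume_pi, Measure.restrict_pi_pi, integral_fintype_prod_eq_prod]

theorem setIntegral_box_prod_pow (hΔ : ∀ l, 0 ≤ Δ l) (k : Fin n → ℕ) :
    ∫ x in box Δ, ∏ l, x l ^ k l = ∏ l, Δ l ^ (k l + 1) / (k l + 1) := by
  rw [setIntegral_box_prod Δ fun l t => t ^ k l]
  refine Finset.prod_congr rfl fun l _ => ?_
  rw [integral_Icc_eq_integral_Ioc, ← intervalIntegral.integral_of_le (hΔ l), integral_pow]
  simp

theorem setIntegral_box_mul_sq_le (hΔ : ∀ l, 0 ≤ Δ l) (i j : Fin n) :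
    ∫ x in box Δ, x i * x j ^ 2 ≤ (∏ l, Δ l) * (Δ i * Δ j ^ 2) / 4 := by
  set k : Fin n → ℕ := Pi.single i 1 + Pi.single j 2
  have hk : ∀ y : Fin n → ℝ, ∏ l, y l ^ k l = y i * y j ^ 2 := by
    intro y
    simp only [k, Pi.add_apply, pow_add, Finset.prod_mul_distrib, Pi.single_apply, pow_ite,
      pow_one, pow_zero, Finset.prod_ite_eq', Finset.mem_univ, if_true]
  have hden : 4 ≤ ∏ l, (1 + (k l : ℝ)) := by
    have hsum : ∑ l, (k l : ℝ) = 3 := by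
      simp [k, Finset.sum_add_distrib, Pi.single_apply]
      norm_num
    linarith [Finset.one_add_sum_le_prod_one_add Finset.univ fun l _ => (k l).cast_nonneg (α := ℝ)]
  calc ∫ x in box Δ, x i * x j ^ 2 = ∏ l, Δ l ^ (k l + 1) / (k l + 1) := by
        simp_rw [← hk]
        exact setIntegral_box_prod_pow hΔ k
    _ = (∏ l, Δ l) * (Δ i * Δ j ^ 2) / ∏ l, (1 + (k l : ℝ)) := by
        rw [Finset.prod_div_distrib]
        congr 1
        · rw [Finset.prod_congr rfl fun l _ => pow_succ (Δ l) (k l), Finset.prod_mul_distrib, hk,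
            mul_comm]
        · exact Finset.prod_congr rfl fun l _ => add_comm _ _
    _ ≤ (∏ l, Δ l) * (Δ i * Δ j ^ 2) / 4 := by
        have : 0 ≤ ∏ l, Δ l := Finset.prod_nonneg fun l _ => hΔ l
        have := hΔ i
        gcongr

theorem abs_setIntegral_box_apply_mul_le (hΔ : ∀ l, 0 ≤ Δ l)
    {g : EuclideanSpace ℝ (Fin n) → ℝ} {C : ℝ} (hC : 0 ≤ C)
    (hg : ∀ x ∈ box Δ, |g x| ≤ C * ‖x‖ ^ 2) (i : Fin n) :
    |∫ x in box Δ, x i * g x| ≤ C * (∏ l, Δ l) * Δ i * (∑ l, Δ l ^ 2) / 4 := by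
  have hint : ∀ j, IntegrableOn (fun x : EuclideanSpace ℝ (Fin n) => x i * x j ^ 2) (box Δ) :=
    fun j => (by fun_prop : Continuous _).continuousOn.integrableOn_compact (isCompact_box Δ)
  rw [← Real.norm_eq_abs]
  calc ‖∫ x in box Δ, x i * g x‖
      ≤ ∫ x in box Δ, C * ∑ j, x i * x j ^ 2 := by
        refine norm_integral_le_of_norm_le
          ((integrable_finsetSum Finset.univ fun j _ => hint j).const_mul C)
          (ae_restrict_of_forall_mem (measurableSet_box Δ) fun x hx => ?_)
        rw [← Finset.mul_sum, ← EuclideanSpace.real_norm_sq_eq, Real.norm_eq_abs, abs_mul,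
          abs_of_nonneg (hx i).1, mul_left_comm]
        exact mul_le_mul_of_nonneg_left (hg x hx) (hx i).1
    _ = C * ∑ j, ∫ x in box Δ, x i * x j ^ 2 := by
        rw [integral_const_mul, integral_finsetSum _ fun j _ => hint j]
    _ ≤ C * ∑ j, (∏ l, Δ l) * (Δ i * Δ j ^ 2) / 4 := by
        gcongr with j
        exact setIntegral_box_mul_sq_le hΔ i j
    _ = C * (∏ l, Δ l) * Δ i * (∑ l, Δ l ^ 2) / 4 := by
        rw [Finset.mul_sum, Finset.mul_sum, Finset.sum_div]
        exact Finset.sum_congr rfl fun j _ => by ring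

end Box

theorem norm_vecE_le {n : ℕ} {v : Fin n → ℝ} {B : ℝ} (hB0 : 0 ≤ B) (hB : ∀ i, |v i| ≤ B) :
    ‖vecE v‖ ≤ √n * B := by
  have hsum : ∑ i, v i ^ 2 ≤ n * B ^ 2 := by
    calc ∑ i, v i ^ 2 ≤ ∑ _i : Fin n, B ^ 2 :=
          Finset.sum_le_sum fun i _ => sq_le_sq' (abs_le.1 (hB i)).1 (abs_le.1 (hB i)).2
      _ = n * B ^ 2 := by simp
  calc ‖vecE v‖ = √(∑ i, v i ^ 2) := by
        rw [EuclideanSpace.norm_eq]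
        simp [vecE]
    _ ≤ √(n * B ^ 2) := Real.sqrt_le_sqrt hsum
    _ = √n * B := by rw [Real.sqrt_mul n.cast_nonneg, Real.sqrt_sq hB0]

theorem Dinv_w_bound_general
    (n : ℕ)
    (x0 : EuclideanSpace ℝ (Fin n))
    (Δ : Fin n → ℝ) (hΔ : ∀ i, 0 < Δ i)
    (f : EuclideanSpace ℝ (Fin n) → ℝ)
    (U : Set (EuclideanSpace ℝ (Fin n))) (hU : IsOpen U)
    (hsub : {y : EuclideanSpace ℝ (Fin n) | ∀ l, y l - x0 l ∈ Set.Icc (0 : ℝ) (Δ l)} ⊆ U)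
    (hf : ContDiffOn ℝ 2 f U)
    (L : NNReal)
    (hlip : LipschitzOnWith L (gradient f)
      {y : EuclideanSpace ℝ (Fin n) | ∀ l, y l - x0 l ∈ Set.Icc (0 : ℝ) (Δ l)})
    (w : Fin n → ℝ)
    (hw : ∀ i, w i = ∫ x in box Δ,
        x i * (f (x0 + x) - f x0 - (inner ℝ (gradient f x0) x : ℝ))) :
    ‖vecE (fun i => w i / Δ i)‖ ≤
      (Real.sqrt n / 8) * (L : ℝ) * (∏ l, Δ l) * Real.sqrt (∑ l, (Δ l) ^ 2) ^ 2 := by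
  have hΔ₀ : ∀ l, 0 ≤ Δ l := fun l => (hΔ l).le
  set S := {y : EuclideanSpace ℝ (Fin n) | ∀ l, y l - x0 l ∈ Set.Icc (0 : ℝ) (Δ l)}
  have hremainder : ∀ x ∈ box Δ,
      |f (x0 + x) - f x0 - ⟪gradient f x0, x⟫| ≤ L / 2 * ‖x‖ ^ 2 := by
    intro x hx
    have hdiff : ∀ z ∈ S, DifferentiableAt ℝ f z := fun z hz =>
      (hf.differentiableOn two_ne_zero).differentiableAt (hU.mem_nhds (hsub hz))
    have hx0 : x0 ∈ S := by simpa [S] using hΔ₀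
    have hx0x : x0 + x ∈ S := fun l => by
      simpa only [PiLp.add_apply, add_sub_cancel_left] using hx l
    simpa using (convex_setOf_forall_sub_apply_mem x0 fun l => convex_Icc 0 (Δ l))
      |>.abs_sub_sub_inner_gradient_le hdiff hlip hx0 hx0x
  have hB : 0 ≤ L * (∏ l, Δ l) * (∑ l, Δ l ^ 2) / 8 :=
    div_nonneg (mul_nonneg (mul_nonneg L.2 (Finset.prod_nonneg fun l _ => hΔ₀ l))
      (Finset.sum_nonneg fun l _ => sq_nonneg _)) (by norm_num)
  have hcoord : ∀ i, |w i / Δ i| ≤ L * (∏ l, Δ l) * (∑ l, Δ l ^ 2) / 8 := by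
    intro i
    rw [abs_div, abs_of_pos (hΔ i), div_le_iff₀ (hΔ i), hw i]
    calc _ ≤ L / 2 * (∏ l, Δ l) * Δ i * (∑ l, Δ l ^ 2) / 4 :=
          abs_setIntegral_box_apply_mul_le hΔ₀ (by positivity) hremainder i
      _ = _ := by ring
  calc ‖vecE fun i => w i / Δ i‖ ≤ √n * (L * (∏ l, Δ l) * (∑ l, Δ l ^ 2) / 8) :=
        norm_vecE_le hB hcoord
    _ = _ := by rw [Real.sq_sqrt (by positivity)]; ring

/-- Lemma 4.3 of the paper (general hyperrectangle): with
`wᵢ = ∫_{R(0;d)} xᵢ·R₁(x⁰+x) dx` where `R₁` is the first-order Taylor remainder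
and `D = diag(Δ₁,…,Δₙ)`, one has `‖D⁻¹w‖ ≤ (√n/8)·L_{∇f}·Δ·Δ_S²`. -/
theorem Dinv_w_bound
    (n : ℕ) (hn : 1 ≤ n)
    (x0 : EuclideanSpace ℝ (Fin n))
    (Δ : Fin n → ℝ) (hΔ : ∀ i, 0 < Δ i)
    (f : EuclideanSpace ℝ (Fin n) → ℝ)
    (U : Set (EuclideanSpace ℝ (Fin n))) (hU : IsOpen U)
    (hsub : {y : EuclideanSpace ℝ (Fin n) | ∀ l, y l - x0 l ∈ Set.Icc (0 : ℝ) (Δ l)} ⊆ U)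
    (hf : ContDiffOn ℝ 2 f U)
    (L : NNReal)
    (hlip : LipschitzOnWith L (gradient f)
      {y : EuclideanSpace ℝ (Fin n) | ∀ l, y l - x0 l ∈ Set.Icc (0 : ℝ) (Δ l)})
    (w : Fin n → ℝ)
    (hw : ∀ i, w i = ∫ x in box Δ,
        x i * (f (x0 + x) - f x0 - (inner ℝ (gradient f x0) x : ℝ))) :
    ‖vecE (fun i => w i / Δ i)‖ ≤
      (Real.sqrt n / 8) * (L : ℝ) * (∏ l, Δ l) * Real.sqrt (∑ l, (Δ l) ^ 2) ^ 2 :=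
  Dinv_w_bound_general n x0 Δ hΔ f U hU hsub hf L hlip w hw
end
end

section
/- Fix n ≥ 1, r > 0, and nonnegative integers α₁,…,α_n, and let P(x) = x₁^{α₁} x₂^{α₂} ⋯ x_n^{α_n}. Set β_i = (α_i+1)/2. Then the Lebesgue integral of P over the closed Euclidean ball B_n(0;r) = {x ∈ ℝⁿ : ‖x‖ ≤ r} equals 0 if some α_i is odd, and equals (r^{α₁+⋯+α_n+n} / (α₁+⋯+α_n+n)) · 2 Γ(β₁)Γ(β₂)⋯Γ(β_n) / Γ(β₁+β₂+⋯+β_n) if every α_i is even. -/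
/-!
In polar coordinates, the integral of a function `f` that is homogeneous of degree `k`
against a radial weight `g ‖x‖` splits as `(∫_{S^{n-1}} f) · ∫₀^∞ t^{n-1+k} g(t) dt`.
Taking `g = 1_{[0,r]}` gives the ball integral as `(∫_{S^{n-1}} P) · r^{k+n}/(k+n)`.
Taking `g(t) = e^{-t²}`, the left side factors by Fubini into the moments `∫ t^{αᵢ} e^{-t²} dt`,
which are `Γ(βᵢ)` or `0` according to the parity of `αᵢ`, and the right side is
`(∫_{S^{n-1}} P) · Γ(Σβᵢ)/2`; this determines the sphere integral of `P`.
-/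

open MeasureTheory Measure Metric Set

theorem MeasureTheory.integral_eq_zero_of_odd {G E : Type*} [MeasurableSpace G] [AddGroup G]
    [MeasurableNeg G] [NormedAddCommGroup E] [NormedSpace ℝ E] {f : G → E} (hf : Function.Odd f)
    (μ : Measure G) [μ.IsNegInvariant] : ∫ x, f x ∂μ = 0 := by
  have h := integral_neg_eq_self f μ
  simp only [hf _, integral_neg] at h
  have h2 : (2 : ℝ) • ∫ x, f x ∂μ = 0 := by
    rw [two_smul]
    nth_rewrite 1 [← h]
    exact neg_add_cancel _
  exact (smul_eq_zero.mp h2).resolve_left two_ne_zero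

theorem integral_Ioi_pow_mul_exp_neg_sq (m : ℕ) :
    ∫ t in Ioi (0 : ℝ), t ^ m * Real.exp (-t ^ 2) = Real.Gamma ((m + 1) / 2) / 2 := by
  have h := integral_rpow_mul_exp_neg_rpow two_pos
    (by linarith [m.cast_nonneg (α := ℝ)] : (-1 : ℝ) < m)
  rw [one_div_mul_eq_div] at h
  rw [← h]
  refine setIntegral_congr_fun measurableSet_Ioi fun t _ ↦ ?_
  norm_cast

theorem integral_pow_mul_exp_neg_sq (a : ℕ) :
    ∫ t : ℝ, t ^ a * Real.exp (-t ^ 2) = if Even a then Real.Gamma ((a + 1) / 2) else 0 := by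
  split_ifs with ha
  · calc ∫ t : ℝ, t ^ a * Real.exp (-t ^ 2) = ∫ t : ℝ, |t| ^ a * Real.exp (-|t| ^ 2) := by
          simp only [ha.pow_abs, sq_abs]
      _ = Real.Gamma ((a + 1) / 2) := by
          rw [integral_comp_abs (f := fun t ↦ t ^ a * Real.exp (-t ^ 2)),
            integral_Ioi_pow_mul_exp_neg_sq]
          ring
  · refine integral_eq_zero_of_odd (fun t ↦ ?_) volume
    simp [(Nat.not_even_iff_odd.mp ha).neg_pow]

theorem Nat.cast_pred_add_add_one {d : ℕ} (hd : 0 < d) (k : ℕ) :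
    ((d - 1 + k : ℕ) : ℝ) + 1 = k + d := by
  rw [← Nat.cast_add_one, show d - 1 + k + 1 = k + d by omega]
  push_cast
  ring

theorem MeasureTheory.Measure.integral_volumeIoiPow {F : Type*} [NormedAddCommGroup F]
    [NormedSpace ℝ F] (n : ℕ) (h : ℝ → F) :
    ∫ t, h t ∂volumeIoiPow n = ∫ t in Ioi (0 : ℝ), t ^ n • h t := by
  simp only [volumeIoiPow, ENNReal.ofReal]
  rw [integral_withDensity_eq_integral_smul (measurable_subtype_coe.pow_const _).real_toNNReal,
    integral_subtype_comap measurableSet_Ioi fun t ↦ Real.toNNReal (t ^ n) • h t]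
  refine setIntegral_congr_fun measurableSet_Ioi fun t ht ↦ ?_
  rw [NNReal.smul_def, Real.coe_toNNReal _ (pow_nonneg (le_of_lt ht) _)]

section Homogeneous

variable {E : Type*} [NormedAddCommGroup E] [NormedSpace ℝ E] [FiniteDimensional ℝ E]
  [Nontrivial E] [MeasurableSpace E] [BorelSpace E] (μ : Measure E) [μ.IsAddHaarMeasure]
  {f : E → ℝ} {k : ℕ}

local notation "dim" => Module.finrank ℝ

theorem integral_mul_fun_norm_of_homogeneous (hf : ∀ x, ∀ t : ℝ, 0 < t → f (t • x) = t ^ k * f x)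
    (g : ℝ → ℝ) :
    ∫ x, f x * g ‖x‖ ∂μ =
      (∫ y, f y ∂μ.toSphere) * ∫ t in Ioi (0 : ℝ), t ^ (dim E - 1 + k) * g t :=
  calc ∫ x, f x * g ‖x‖ ∂μ = ∫ x : ({0}ᶜ : Set E), f x * g ‖(x : E)‖ ∂μ.comap (↑) := by
        rw [integral_subtype_comap (measurableSet_singleton _).compl fun x ↦ f x * g ‖x‖,
          restrict_compl_singleton]
    _ = ∫ z : sphere (0 : E) 1 × Ioi (0 : ℝ), f z.1 * ((z.2 : ℝ) ^ k * g z.2)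
          ∂μ.toSphere.prod (volumeIoiPow (dim E - 1)) := by
        rw [← μ.measurePreserving_homeomorphUnitSphereProd.integral_comp
          (Homeomorph.measurableEmbedding _)]
        congr 1 with x
        have hx : 0 < ‖(x : E)‖ := norm_pos_iff.2 x.2
        rw [← smul_inv_smul₀ hx.ne' (x : E), hf _ _ hx, smul_inv_smul₀ hx.ne']
        simp only [homeomorphUnitSphereProd_apply_fst_coe, homeomorphUnitSphereProd_apply_snd_coe]
        ring
    _ = (∫ y, f y ∂μ.toSphere) * ∫ t in Ioi (0 : ℝ), t ^ (dim E - 1 + k) * g t := by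
        rw [integral_prod_mul (fun y : sphere (0 : E) 1 ↦ f y)
            fun t : Ioi (0 : ℝ) ↦ (t : ℝ) ^ k * g t,
          integral_volumeIoiPow _ fun t ↦ t ^ k * g t]
        simp only [smul_eq_mul, pow_add, mul_assoc]

theorem setIntegral_closedBall_of_homogeneous
    (hf : ∀ x, ∀ t : ℝ, 0 < t → f (t • x) = t ^ k * f x) {r : ℝ} (hr : 0 ≤ r) :
    ∫ x in closedBall 0 r, f x ∂μ =
      (∫ y, f y ∂μ.toSphere) * (r ^ (k + dim E) / (k + dim E)) := by
  have hdim : dim E - 1 + k + 1 = k + dim E := by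
    have := Module.finrank_pos (R := ℝ) (M := E)
    omega
  have hball : ∀ x, f x * (Iic r).indicator 1 ‖x‖ = (closedBall 0 r).indicator f x := fun x ↦ by
    by_cases hx : ‖x‖ ≤ r <;> simp [indicator, hx]
  have hray : ∀ t, t ^ (dim E - 1 + k) * (Iic r).indicator 1 t =
      (Iic r).indicator (· ^ (dim E - 1 + k)) t := fun t ↦ by
    by_cases ht : t ≤ r <;> simp [indicator, ht]
  rw [← integral_indicator measurableSet_closedBall, ← funext hball,
    integral_mul_fun_norm_of_homogeneous μ hf, funext hray,
    setIntegral_indicator measurableSet_Iic, Ioi_inter_Iic, ← intervalIntegral.integral_of_le hr,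
    integral_pow, hdim, Nat.cast_pred_add_add_one Module.finrank_pos, zero_pow (by omega),
    sub_zero]

theorem integral_mul_exp_neg_norm_sq_of_homogeneous
    (hf : ∀ x, ∀ t : ℝ, 0 < t → f (t • x) = t ^ k * f x) :
    ∫ x, f x * Real.exp (-‖x‖ ^ 2) ∂μ =
      (∫ y, f y ∂μ.toSphere) * (Real.Gamma ((k + dim E) / 2) / 2) := by
  rw [integral_mul_fun_norm_of_homogeneous μ hf (fun t ↦ Real.exp (-t ^ 2)),
    integral_Ioi_pow_mul_exp_neg_sq, Nat.cast_pred_add_add_one Module.finrank_pos]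

end Homogeneous

namespace EuclideanSpace

variable {ι : Type*} [Fintype ι]

theorem integral_prod_apply (g : ι → ℝ → ℝ) :
    ∫ x : EuclideanSpace ℝ ι, ∏ i, g i (x i) = ∏ i, ∫ t, g i t := by
  rw [← (volume_preserving_symm_measurableEquiv_toLp ι).symm.integral_comp
    (MeasurableEquiv.measurableEmbedding _)]
  exact integral_fintype_prod_volume_eq_prod g

theorem exp_neg_norm_sq (x : EuclideanSpace ℝ ι) :
    Real.exp (-‖x‖ ^ 2) = ∏ i, Real.exp (-x i ^ 2) := by
  simp only [real_norm_sq_eq, ← Real.exp_sum, Finset.sum_neg_distrib]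

theorem integral_prod_pow_mul_exp_neg_norm_sq (α : ι → ℕ) :
    ∫ x : EuclideanSpace ℝ ι, (∏ i, x i ^ α i) * Real.exp (-‖x‖ ^ 2) =
      ∏ i, ∫ t : ℝ, t ^ α i * Real.exp (-t ^ 2) := by
  simp only [exp_neg_norm_sq, ← Finset.prod_mul_distrib]
  exact integral_prod_apply fun i t ↦ t ^ α i * Real.exp (-t ^ 2)

theorem prod_pow_apply_smul (α : ι → ℕ) (x : EuclideanSpace ℝ ι) (t : ℝ) :
    ∏ i, (t • x) i ^ α i = t ^ (∑ i, α i) * ∏ i, x i ^ α i := by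
  simp only [PiLp.smul_apply, smul_eq_mul, mul_pow, Finset.prod_mul_distrib,
    Finset.prod_pow_eq_pow_sum]

end EuclideanSpace

/-- Theorem 5.1 of the paper (Folland): for the monomial `P(x) = ∏ᵢ xᵢ^{αᵢ}` and
`βᵢ = (αᵢ+1)/2`, the integral of `P` over the closed ball `Bₙ(0;r)` is `0` if
some `αᵢ` is odd, and equals
`(r^{Σαᵢ+n}/(Σαᵢ+n)) · 2(∏ᵢΓ(βᵢ))/Γ(Σᵢβᵢ)` if all `αᵢ` are even. -/
theorem integral_monomial_ball
    (n : ℕ) (hn : 1 ≤ n) (r : ℝ) (hr : 0 < r) (α : Fin n → ℕ) :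
    (∫ x in Metric.closedBall (0 : EuclideanSpace ℝ (Fin n)) r, ∏ i, x i ^ α i)
      = if ∀ i, Even (α i) then
          (r ^ ((∑ i, α i) + n) / (((∑ i, α i : ℕ) : ℝ) + n)) *
            (2 * (∏ i, Real.Gamma (((α i : ℝ) + 1) / 2)) /
              Real.Gamma (∑ i, ((α i : ℝ) + 1) / 2))
        else 0 := by
  have : NeZero n := ⟨by omega⟩
  have hhom := fun x t (_ : 0 < t) ↦ EuclideanSpace.prod_pow_apply_smul α x t
  set c := ∫ y : sphere (0 : EuclideanSpace ℝ (Fin n)) 1,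
    ∏ i, (y : EuclideanSpace ℝ (Fin n)) i ^ α i ∂volume.toSphere
  have hβ : ∑ i, ((α i : ℝ) + 1) / 2 = ((∑ i, α i : ℕ) + n) / 2 := by
    simp [← Finset.sum_div, Finset.sum_add_distrib]
  have hgauss : ∏ i, ∫ t : ℝ, t ^ α i * Real.exp (-t ^ 2) =
      c * (Real.Gamma (∑ i, ((α i : ℝ) + 1) / 2) / 2) := by
    rw [← EuclideanSpace.integral_prod_pow_mul_exp_neg_norm_sq,
      integral_mul_exp_neg_norm_sq_of_homogeneous volume hhom, finrank_euclideanSpace_fin, hβ]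
  rw [setIntegral_closedBall_of_homogeneous volume hhom hr.le, finrank_euclideanSpace_fin]
  change c * _ = _
  simp only [integral_pow_mul_exp_neg_sq] at hgauss
  split_ifs with h
  · rw [Finset.prod_congr rfl fun i _ ↦ if_pos (h i)] at hgauss
    rw [hgauss]
    field_simp
  · obtain ⟨i, hi⟩ := not_forall.mp h
    rw [Finset.prod_eq_zero (Finset.mem_univ i) (if_neg hi), eq_comm, mul_eq_zero] at hgauss
    rw [hgauss.resolve_right (by positivity), zero_mul]
end
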